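/- In AQ_n (n ≥ 3), for two hypercube edges u u^i and u u^j with 1 ≤ i < j ≤ n, the vertices u^i and u^j have exactly 4 common neighbors if and only if (i ≥ 2 and j = i+1) or (i = 1 and j ∈ {2,3}); in all other cases their common neighbors are exactly {u, u^{i,j}}. -/

import Mathlib

/-- Number of coordinates in which two vertices of the cube differ (Hamming distance). -/
def diffCount {n : ℕ} (x y : Fin n → Bool) : ℕ :=
  (Finset.univ.filter fun i => x i ≠ y i).card

lemma diffCount_comm {n : ℕ} (x y : Fin n → Bool) : diffCount x y = diffCount y x := by
  unfold diffCount
  congr 1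
  apply Finset.filter_congr
  intro i _
  exact ne_comm

/-- The `n`-dimensional hypercube. -/
def Qn (n : ℕ) : SimpleGraph (Fin n → Bool) where
  Adj x y := diffCount x y = 1
  symm := ⟨by intro x y h; rw [diffCount_comm]; exact h⟩
  loopless := ⟨by intro x h; simp [diffCount] at h⟩

/-- The `n`-dimensional folded hypercube. -/
def FQn (n : ℕ) : SimpleGraph (Fin n → Bool) where
  Adj x y := x ≠ y ∧ (diffCount x y = 1 ∨ diffCount x y = n)
  symm := ⟨by
    rintro x y ⟨h1, h2⟩
    exact ⟨h1.symm, by rw [diffCount_comm]; exact h2⟩⟩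
  loopless := ⟨fun x h => h.1 rfl⟩

/-- Flip bit `i` (hypercube neighbour `u^{i+1}` in 1-based notation). -/
def hFlip {n : ℕ} (u : Fin n → Bool) (i : Fin n) : Fin n → Bool :=
  fun j => if j = i then !(u j) else u j

/-- Flip bits `0,…,i` (complement neighbour `ū^{i+1}` in 1-based notation). -/
def cFlip {n : ℕ} (u : Fin n → Bool) (i : Fin n) : Fin n → Bool :=
  fun j => if j ≤ i then !(u j) else u j

lemma hFlip_hFlip {n : ℕ} (u : Fin n → Bool) (i : Fin n) : hFlip (hFlip u i) i = u := by
  funext j; simp only [hFlip]; split <;> simp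

lemma cFlip_cFlip {n : ℕ} (u : Fin n → Bool) (i : Fin n) : cFlip (cFlip u i) i = u := by
  funext j; simp only [cFlip]; split <;> simp

/-- The `n`-dimensional augmented cube. -/
def AQn (n : ℕ) : SimpleGraph (Fin n → Bool) where
  Adj x y := x ≠ y ∧ ((∃ i, y = hFlip x i) ∨ (∃ i : Fin n, 1 ≤ i.val ∧ y = cFlip x i))
  symm := ⟨by
    rintro x y ⟨h1, h2⟩
    refine ⟨h1.symm, ?_⟩
    rcases h2 with ⟨i, rfl⟩ | ⟨i, hi, rfl⟩
    · exact Or.inl ⟨i, (hFlip_hFlip x i).symm⟩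
    · exact Or.inr ⟨i, hi, (cFlip_cFlip x i).symm⟩⟩
  loopless := ⟨fun x h => h.1 rfl⟩

/-!
Write every vertex as `flipOn u C`, `u` with the (0-based) positions in `C` flipped. Then `AQ_n`
is the Cayley graph of `(ℤ/2)ⁿ` whose generators flip a single position `{k}` or a prefix
`Iic m` with `m ≥ 1`, so `flipOn u C` is a common neighbour of `u^i = flipOn u {i}` and `u^j`
iff `A = {i} ∆ C` and `B = {j} ∆ C` are generators, which then satisfy `A ∆ B = {i, j}`.
Besides `{A, B} = {{i}, {j}}`, giving `u` and `u^{i,j}`, a singleton and a prefix differ in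
exactly two positions only for the prefix `Iic 2` (so `j ≤ 2`), and two prefixes only for
`Iic (i - 1)` and `Iic j` with `j = i + 1`, `i ≥ 2`; each of these cases adds two common
neighbours.
-/

open Set
open scoped symmDiff

lemma Set.singleton_symmDiff_singleton {α : Type*} {a b : α} (h : a ≠ b) :
    ({a} ∆ {b} : Set α) = {a, b} := by
  ext x
  simp only [mem_symmDiff, mem_singleton_iff, mem_insert_iff]
  constructor
  · rintro (⟨rfl, -⟩ | ⟨rfl, -⟩) <;> simp
  · rintro (rfl | rfl)
    exacts [.inl ⟨rfl, h⟩, .inr ⟨rfl, h.symm⟩]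

lemma Set.ncard_quadruple {α : Type*} {a b c d : α} (hab : a ≠ b) (hac : a ≠ c) (had : a ≠ d)
    (hbc : b ≠ c) (hbd : b ≠ d) (hcd : c ≠ d) : ({a, b, c, d} : Set α).ncard = 4 := by
  rw [ncard_insert_of_notMem (by simp [hab, hac, had]) (toFinite _),
    ncard_insert_of_notMem (by simp [hbc, hbd]) (toFinite _), ncard_pair hcd]

section AugmentedCube

variable {n : ℕ}

/- Flip sets live in `Set ℕ` rather than `Set (Fin n)` so that index arithmetic such as
`3 - i - j` or `Iic (i - 1)` stays in `ℕ`; positions `≥ n` are ignored. -/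
open Classical in
noncomputable def flipOn (u : Fin n → Bool) (S : Set ℕ) : Fin n → Bool :=
  fun t => if (t : ℕ) ∈ S then !u t else u t

section flipOn

variable {u : Fin n → Bool} {S T : Set ℕ}

@[simp]
lemma flipOn_empty (u : Fin n → Bool) : flipOn u ∅ = u := by
  funext t; simp [flipOn]

lemma flipOn_flipOn (u : Fin n → Bool) (S T : Set ℕ) :
    flipOn (flipOn u S) T = flipOn u (S ∆ T) := by
  funext t
  by_cases hS : (t : ℕ) ∈ S <;> by_cases hT : (t : ℕ) ∈ T <;> simp [flipOn, mem_symmDiff, hS, hT]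

lemma flipOn_inj (hS : S ⊆ Iio n) (hT : T ⊆ Iio n) : flipOn u S = flipOn u T ↔ S = T := by
  refine ⟨fun h => ?_, congrArg _⟩
  ext v
  by_cases hv : v < n
  · have := congrFun h ⟨v, hv⟩
    by_cases hvS : v ∈ S <;> by_cases hvT : v ∈ T <;> simp_all [flipOn]
  · exact iff_of_false (fun h => hv (hS h)) (fun h => hv (hT h))

lemma flipOn_ne_flipOn {v : ℕ} (hv : v < n) (h : ¬(v ∈ S ↔ v ∈ T)) :
    flipOn u S ≠ flipOn u T := by
  intro hST
  have := congrFun hST ⟨v, hv⟩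
  by_cases hvS : v ∈ S <;> by_cases hvT : v ∈ T <;> simp_all [flipOn]

lemma exists_flipOn_eq (u w : Fin n → Bool) : ∃ C ⊆ Iio n, flipOn u C = w := by
  refine ⟨{v | ∃ h : v < n, u ⟨v, h⟩ ≠ w ⟨v, h⟩}, fun _ hv => hv.1, ?_⟩
  funext t
  cases hu : u t <;> cases hw : w t <;> simp [flipOn, hu, hw]

lemma hFlip_eq_flipOn (u : Fin n → Bool) (k : Fin n) : hFlip u k = flipOn u {(k : ℕ)} := by
  funext t; simp [hFlip, flipOn, Fin.val_inj]

lemma cFlip_eq_flipOn (u : Fin n → Bool) (k : Fin n) : cFlip u k = flipOn u (Iic (k : ℕ)) := by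
  funext t; simp only [cFlip, flipOn, mem_Iic, Fin.le_iff_val_le_val]

end flipOn

def IsAQGen (n : ℕ) (A : Set ℕ) : Prop :=
  (∃ k < n, A = {k}) ∨ ∃ m, 1 ≤ m ∧ m < n ∧ A = Iic m

lemma AQn.adj_flipOn {x : Fin n → Bool} {S : Set ℕ} (h : IsAQGen n S) :
    (AQn n).Adj x (flipOn x S) := by
  have hne : ∀ v < n, v ∈ S → x ≠ flipOn x S := fun v hv hvS => by
    simpa using flipOn_ne_flipOn (u := x) (S := ∅) (T := S) hv (by simp [hvS])
  rcases h with ⟨k, hk, rfl⟩ | ⟨m, hm, hmn, rfl⟩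
  · exact ⟨hne k hk rfl, .inl ⟨⟨k, hk⟩, (hFlip_eq_flipOn x ⟨k, hk⟩).symm⟩⟩
  · exact ⟨hne 0 (by omega) (by simp), .inr ⟨⟨m, hmn⟩, hm, (cFlip_eq_flipOn x ⟨m, hmn⟩).symm⟩⟩

lemma AQn.isAQGen_of_adj_flipOn {x : Fin n → Bool} {S : Set ℕ} (hS : S ⊆ Iio n)
    (h : (AQn n).Adj x (flipOn x S)) : IsAQGen n S := by
  obtain ⟨-, ⟨k, hk⟩ | ⟨m, hm, hmS⟩⟩ := h
  · rw [hFlip_eq_flipOn, flipOn_inj hS (by simp)] at hk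
    exact .inl ⟨k, k.isLt, hk⟩
  · rw [cFlip_eq_flipOn, flipOn_inj hS (Iic_subset_Iio.2 m.isLt)] at hmS
    exact .inr ⟨m, hm, m.isLt, hmS⟩

lemma AQn.neighborSet_inter_neighborSet_flipOn (u : Fin n → Bool) {A B : Set ℕ}
    (hA : A ⊆ Iio n) (hB : B ⊆ Iio n) :
    (AQn n).neighborSet (flipOn u A) ∩ (AQn n).neighborSet (flipOn u B) =
      flipOn u '' {C | IsAQGen n (A ∆ C) ∧ IsAQGen n (B ∆ C)} := by
  have hshift : ∀ A C, flipOn u C = flipOn (flipOn u A) (A ∆ C) := fun A C => by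
    rw [flipOn_flipOn, symmDiff_symmDiff_cancel_left]
  ext w
  constructor
  · rintro ⟨hwA, hwB⟩
    obtain ⟨C, hC, rfl⟩ := exists_flipOn_eq u w
    rw [SimpleGraph.mem_neighborSet, hshift A C] at hwA
    rw [SimpleGraph.mem_neighborSet, hshift B C] at hwB
    exact ⟨C, ⟨AQn.isAQGen_of_adj_flipOn (symmDiff_subset_union.trans (union_subset hA hC)) hwA,
      AQn.isAQGen_of_adj_flipOn (symmDiff_subset_union.trans (union_subset hB hC)) hwB⟩, rfl⟩
  · rintro ⟨C, ⟨hAC, hBC⟩, rfl⟩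
    exact ⟨hshift A C ▸ AQn.adj_flipOn hAC, hshift B C ▸ AQn.adj_flipOn hBC⟩

section pairs

variable {i j k l m m' : ℕ}

lemma eq_pair_of_singleton_symmDiff_singleton (hij : i < j)
    (h : ({k} ∆ {l} : Set ℕ) = {i, j}) : k = i ∧ l = j ∨ k = j ∧ l = i := by
  have hv := fun v => Set.ext_iff.1 h v
  simp only [mem_symmDiff, mem_singleton_iff, mem_insert_iff] at hv
  have := hv i; have := hv j; have := hv k; have := hv l
  omega

lemma le_two_of_singleton_symmDiff_Iic (hm : 1 ≤ m) (hij : i < j)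
    (h : ({k} ∆ Iic m : Set ℕ) = {i, j}) : j ≤ 2 ∧ m = 2 ∧ k = 3 - i - j := by
  have hv := fun v => Set.ext_iff.1 h v
  simp only [mem_symmDiff, mem_singleton_iff, mem_Iic, mem_insert_iff] at hv
  have := hv 0; have := hv 1; have := hv 2; have := hv 3
  have := hv i; have := hv j; have := hv k; have := hv m
  omega

lemma consecutive_of_Iic_symmDiff_Iic (hm : 1 ≤ m) (hm' : 1 ≤ m') (hij : i < j)
    (h : (Iic m ∆ Iic m' : Set ℕ) = {i, j}) :
    2 ≤ i ∧ j = i + 1 ∧ (m = i - 1 ∧ m' = j ∨ m = j ∧ m' = i - 1) := by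
  have hv := fun v => Set.ext_iff.1 h v
  simp only [mem_symmDiff, mem_Iic, mem_insert_iff, mem_singleton_iff] at hv
  have := hv i; have := hv (i + 1); have := hv j; have := hv (j - 1)
  have := hv m; have := hv (m + 1); have := hv m'; have := hv (m' + 1)
  omega

lemma IsAQGen.eq_of_symmDiff_eq_pair {A B : Set ℕ} (hA : IsAQGen n A) (hB : IsAQGen n B)
    (hij : i < j) (h : A ∆ B = {i, j}) :
    A = {i} ∨ A = {j} ∨ (j ≤ 2 ∧ (A = {3 - i - j} ∨ A = Iic 2)) ∨
      (2 ≤ i ∧ j = i + 1 ∧ (A = Iic (i - 1) ∨ A = Iic j)) := by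
  rcases hA with ⟨k, -, rfl⟩ | ⟨m, hm, -, rfl⟩ <;>
    rcases hB with ⟨l, -, rfl⟩ | ⟨m', hm', -, rfl⟩
  · obtain ⟨rfl, -⟩ | ⟨rfl, -⟩ := eq_pair_of_singleton_symmDiff_singleton hij h <;> simp
  · obtain ⟨hj, -, rfl⟩ := le_two_of_singleton_symmDiff_Iic hm' hij h
    simp [hj]
  · obtain ⟨hj, rfl, -⟩ :=
      le_two_of_singleton_symmDiff_Iic hm hij (symmDiff_comm (Iic m) _ ▸ h)
    simp [hj]
  · obtain ⟨hi, hj, ⟨rfl, -⟩ | ⟨rfl, -⟩⟩ := consecutive_of_Iic_symmDiff_Iic hm hm' hij h <;>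
      simp [hi, hj]

end pairs

lemma isAQGen_symmDiff_singleton_iff {i j : ℕ} {C : Set ℕ} (hn : 3 ≤ n) (hij : i < j)
    (hj : j < n) :
    IsAQGen n ({i} ∆ C) ∧ IsAQGen n ({j} ∆ C) ↔
      C = ∅ ∨ C = {i, j} ∨ (j ≤ 2 ∧ (C = {i, 3 - i - j} ∨ C = {j, 3 - i - j})) ∨
        (2 ≤ i ∧ j = i + 1 ∧ (C = Iic i ∨ C = Iic j \ {i})) := by
  constructor
  · rintro ⟨hA, hB⟩
    have hAB : ({i} ∆ C) ∆ ({j} ∆ C) = {i, j} := by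
      rw [symmDiff_symmDiff_symmDiff_comm, symmDiff_self, symmDiff_bot,
        singleton_symmDiff_singleton hij.ne]
    rcases hA.eq_of_symmDiff_eq_pair hB hij hAB with h | h | ⟨hj2, h | h⟩ | ⟨hi2, hji, h | h⟩ <;>
      rw [← symmDiff_symmDiff_cancel_left {i} C, h]
    · exact .inl (symmDiff_self _)
    · exact .inr (.inl (singleton_symmDiff_singleton hij.ne))
    · refine .inr (.inr (.inl ⟨hj2, .inl ?_⟩))
      ext v; simp only [mem_symmDiff, mem_singleton_iff, mem_insert_iff]; omega
    · refine .inr (.inr (.inl ⟨hj2, .inr ?_⟩))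
      ext v; simp only [mem_symmDiff, mem_singleton_iff, mem_insert_iff, mem_Iic]; omega
    · refine .inr (.inr (.inr ⟨hi2, hji, .inl ?_⟩))
      ext v; simp only [mem_symmDiff, mem_singleton_iff, mem_Iic]; omega
    · refine .inr (.inr (.inr ⟨hi2, hji, .inr ?_⟩))
      ext v; simp only [mem_symmDiff, mem_singleton_iff, mem_Iic, mem_sdiff]; omega
  · rintro (rfl | rfl | ⟨hj2, rfl | rfl⟩ | ⟨hi2, rfl, rfl | rfl⟩)
    · exact ⟨.inl ⟨i, by omega, by simp⟩, .inl ⟨j, hj, by simp⟩⟩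
    · refine ⟨.inl ⟨j, hj, ?_⟩, .inl ⟨i, by omega, ?_⟩⟩
      all_goals ext v; simp only [mem_symmDiff, mem_singleton_iff, mem_insert_iff]; omega
    · refine ⟨.inl ⟨3 - i - j, by omega, ?_⟩, .inr ⟨2, by omega, by omega, ?_⟩⟩
      all_goals ext v; simp only [mem_symmDiff, mem_singleton_iff, mem_insert_iff, mem_Iic]; omega
    · refine ⟨.inr ⟨2, by omega, by omega, ?_⟩, .inl ⟨3 - i - j, by omega, ?_⟩⟩
      all_goals ext v; simp only [mem_symmDiff, mem_singleton_iff, mem_insert_iff, mem_Iic]; omega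
    · refine ⟨.inr ⟨i - 1, by omega, by omega, ?_⟩, .inr ⟨i + 1, by omega, hj, ?_⟩⟩
      all_goals ext v; simp only [mem_symmDiff, mem_singleton_iff, mem_Iic]; omega
    · refine ⟨.inr ⟨i + 1, by omega, hj, ?_⟩, .inr ⟨i - 1, by omega, by omega, ?_⟩⟩
      all_goals ext v; simp only [mem_symmDiff, mem_singleton_iff, mem_Iic, mem_sdiff]; omega

section commonNbrs

variable (u : Fin n → Bool) {i j : ℕ}

lemma AQn.commonNbrs_flipOn_singleton (hn : 3 ≤ n) (hij : i < j) (hj : j < n) :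
    (AQn n).neighborSet (flipOn u {i}) ∩ (AQn n).neighborSet (flipOn u {j}) =
      flipOn u '' {C | C = ∅ ∨ C = {i, j} ∨ (j ≤ 2 ∧ (C = {i, 3 - i - j} ∨ C = {j, 3 - i - j})) ∨
        (2 ≤ i ∧ j = i + 1 ∧ (C = Iic i ∨ C = Iic j \ {i}))} := by
  rw [AQn.neighborSet_inter_neighborSet_flipOn u (singleton_subset_iff.2 (hij.trans hj))
    (singleton_subset_iff.2 hj)]
  simp_rw [isAQGen_symmDiff_singleton_iff hn hij hj]

lemma AQn.commonNbrs_flipOn_singleton_of_not (hn : 3 ≤ n) (hij : i < j) (hj : j < n)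
    (h : ¬(j ≤ 2 ∨ 2 ≤ i ∧ j = i + 1)) :
    (AQn n).neighborSet (flipOn u {i}) ∩ (AQn n).neighborSet (flipOn u {j}) =
      {u, flipOn u {i, j}} := by
  have hB : ∀ X : Prop, ¬(2 ≤ i ∧ j = i + 1 ∧ X) := fun X hX => h (.inr ⟨hX.1, hX.2.1⟩)
  rw [AQn.commonNbrs_flipOn_singleton u hn hij hj]
  simp only [(not_or.1 h).1, hB, false_and, or_false, ofPred_or, ofPred_eq_eq_singleton,
    singleton_union, image_insert_eq, image_singleton, flipOn_empty]

lemma AQn.ncard_commonNbrs_flipOn_singleton (hn : 3 ≤ n) (hij : i < j) (hj : j < n) :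
    ((AQn n).neighborSet (flipOn u {i}) ∩ (AQn n).neighborSet (flipOn u {j})).ncard =
      if j ≤ 2 ∨ 2 ≤ i ∧ j = i + 1 then 4 else 2 := by
  have hi : i < n := hij.trans hj
  split_ifs with h
  · have hsep : ∀ {S T : Set ℕ}, ¬(i ∈ S ↔ i ∈ T) ∨ ¬(j ∈ S ↔ j ∈ T) →
        flipOn u S ≠ flipOn u T := fun h => h.elim (flipOn_ne_flipOn hi) (flipOn_ne_flipOn hj)
    rw [AQn.commonNbrs_flipOn_singleton u hn hij hj]
    rcases h with hA | ⟨hi2, rfl⟩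
    · simp only [hA, show ¬2 ≤ i by omega, true_and, false_and, or_false, ofPred_or,
        ofPred_eq_eq_singleton, singleton_union, image_insert_eq, image_singleton]
      apply ncard_quadruple <;> apply hsep <;> simp <;> omega
    · simp only [show ¬i + 1 ≤ 2 by omega, hi2, true_and, false_and, false_or, ofPred_or,
        ofPred_eq_eq_singleton, singleton_union, image_insert_eq, image_singleton]
      apply ncard_quadruple <;> apply hsep <;> simp
  · rw [AQn.commonNbrs_flipOn_singleton_of_not u hn hij hj h, ncard_pair]
    simpa using flipOn_ne_flipOn (u := u) (S := ∅) hi (by simp)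

end commonNbrs

end AugmentedCube

/-- for two hypercube edges `u u^i`, `u u^j` of `AQ_n` (`n ≥ 3`) with
`i < j` (indices `i j : Fin n` encoding 1-based bits `i+1 < j+1`), `u^i` and `u^j` have
exactly 4 common neighbours iff (`i+1 ≥ 2` and `j = i+1`) or (`i+1 = 1` and
`j+1 ∈ {2,3}`); otherwise their common neighbours are exactly `{u, u^{i,j}}`. -/
theorem stmt14 (n : ℕ) (hn : 3 ≤ n) (u : Fin n → Bool) (i j : Fin n)
    (hij : i.val < j.val) :
    (((AQn n).neighborSet (hFlip u i) ∩ (AQn n).neighborSet (hFlip u j)).ncard = 4 ↔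
      (1 ≤ i.val ∧ j.val = i.val + 1) ∨ (i.val = 0 ∧ (j.val = 1 ∨ j.val = 2))) ∧
    (¬ ((1 ≤ i.val ∧ j.val = i.val + 1) ∨ (i.val = 0 ∧ (j.val = 1 ∨ j.val = 2))) →
      (AQn n).neighborSet (hFlip u i) ∩ (AQn n).neighborSet (hFlip u j) =
        {u, hFlip (hFlip u i) j}) := by
  have hcases : (1 ≤ i.val ∧ j.val = i.val + 1) ∨ (i.val = 0 ∧ (j.val = 1 ∨ j.val = 2)) ↔
      j.val ≤ 2 ∨ 2 ≤ i.val ∧ j.val = i.val + 1 := by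
    omega
  simp only [hcases, hFlip_eq_flipOn, flipOn_flipOn, singleton_symmDiff_singleton hij.ne,
    AQn.ncard_commonNbrs_flipOn_singleton u hn hij j.isLt]
  exact ⟨by split_ifs <;> simp [*], AQn.commonNbrs_flipOn_singleton_of_not u hn hij j.isLt⟩
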